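/- arXiv:1304.2088 — 6 statements merged into one kernel-verified Lean document; each statement's English description precedes it below -/
import Mathlib

section
/- Let α, β > 0 with 2β ≤ α. Suppose there is a family of sets (M_i) in ℝ² with designated points p_i ∈ ℝ² such that: (1) each M_i is contained in the closed ball of radius β centered at p_i; (2) dist(p_i, p_j) ≥ α for all i ≠ j; and (3) the unit lattice ℤ × ℤ is contained in the union of the M_i. Then for every d ∈ [2/α, 1/β], the lattice L_d can be covered by closed unit disks with pairwise disjoint interiors. -/
/-- The square lattice `(dℤ) × (dℤ)` in the Euclidean plane. -/
def squareLattice (d : ℝ) : Set (EuclideanSpace ℝ (Fin 2)) :=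
  {p | ∃ m n : ℤ, p 0 = d * m ∧ p 1 = d * n}

/-- A set `S ⊆ ℝ²` is coverable by closed unit disks with pairwise disjoint interiors:
there is a family of centers with pairwise distances at least `2` such that `S` is
contained in the union of the closed unit balls about the centers. -/
def CoverableByUnitDisks (S : Set (EuclideanSpace ℝ (Fin 2))) : Prop :=
  ∃ (ι : Type) (c : ι → EuclideanSpace ℝ (Fin 2)),
    (∀ i j, i ≠ j → 2 ≤ dist (c i) (c j)) ∧
    S ⊆ ⋃ i, Metric.closedBall (c i) 1

/-! Scaling the pattern by `d` turns the motif balls of radius `β` into balls of radius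
`dβ ≤ 1` around the centers `d • pᵢ`, which are `dα ≥ 2` apart, and carries `ℤ²` onto `L_d`. -/

open Metric Set Pointwise

lemma squareLattice_subset_smul (d : ℝ) : squareLattice d ⊆ d • squareLattice 1 := by
  rintro x ⟨m, n, hx0, hx1⟩
  refine ⟨!₂[(m : ℝ), n], ⟨m, n, by simp, by simp⟩, ?_⟩
  ext k
  fin_cases k <;> simp [hx0, hx1]

lemma smul_iUnion_closedBall {E ι : Type*} [NormedAddCommGroup E] [NormedSpace ℝ E]
    {c : ℝ} (hc : c ≠ 0) (p : ι → E) (r : ℝ) :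
    c • ⋃ i, closedBall (p i) r = ⋃ i, closedBall (c • p i) (‖c‖ * r) := by
  simp only [smul_set_iUnion, smul_closedBall' hc]

theorem motif_pattern_coverable_general (α β : ℝ) (hα : 0 < α) (hβ : 0 < β)
    (ι : Type) (M : ι → Set (EuclideanSpace ℝ (Fin 2))) (p : ι → EuclideanSpace ℝ (Fin 2))
    (hM : ∀ i, M i ⊆ Metric.closedBall (p i) β)
    (hsep : ∀ i j, i ≠ j → α ≤ dist (p i) (p j))
    (hcov : squareLattice 1 ⊆ ⋃ i, M i) :
    ∀ d ∈ Set.Icc (2 / α) (1 / β), CoverableByUnitDisks (squareLattice d) := by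
  rintro d ⟨hαd, hdβ⟩
  have hd : 0 < d := (div_pos two_pos hα).trans_le hαd
  refine ⟨ι, fun i => d • p i, fun i j hij => ?_, ?_⟩
  · calc (2 : ℝ) = 2 / α * α := by field_simp
      _ ≤ d * dist (p i) (p j) := mul_le_mul hαd (hsep i j hij) hα.le hd.le
      _ = dist (d • p i) (d • p j) := by rw [dist_smul₀, Real.norm_of_nonneg hd.le]
  · have hdβ' : d * β ≤ 1 := (le_div_iff₀ hβ).mp hdβ
    calc squareLattice d ⊆ d • squareLattice 1 := squareLattice_subset_smul d
      _ ⊆ d • ⋃ i, closedBall (p i) β := smul_set_mono (hcov.trans (iUnion_mono hM))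
      _ = ⋃ i, closedBall (d • p i) (d * β) := by
        rw [smul_iUnion_closedBall hd.ne', Real.norm_of_nonneg hd.le]
      _ ⊆ ⋃ i, closedBall (d • p i) 1 :=
        iUnion_mono fun i => closedBall_subset_closedBall hdβ'

theorem motif_pattern_coverable (α β : ℝ) (hα : 0 < α) (hβ : 0 < β) (hadm : 2 * β ≤ α)
    (ι : Type) (M : ι → Set (EuclideanSpace ℝ (Fin 2))) (p : ι → EuclideanSpace ℝ (Fin 2))
    (hM : ∀ i, M i ⊆ Metric.closedBall (p i) β)
    (hsep : ∀ i j, i ≠ j → α ≤ dist (p i) (p j))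
    (hcov : squareLattice 1 ⊆ ⋃ i, M i) :
    ∀ d ∈ Set.Icc (2 / α) (1 / β), CoverableByUnitDisks (squareLattice d) :=
  motif_pattern_coverable_general α β hα hβ ι M p hM hsep hcov
end

section
/- For every real number d with 2/√13 ≤ d ≤ √(2/5), the lattice L_d can be covered by closed unit disks with pairwise disjoint interiors. -/
/-!
Place the disk centers on the lattice spanned by `d • (2, 3)` and `d • (-2, 3)`, shifted by
`d • (1/2, 1/2)`. Two distinct centers differ by `d • (2m, 3n)` with `m ≡ n (mod 2)`, so their
squared distance is at least `13 d² ≥ 4`. Modulo this lattice every point of `ℤ²` is congruent to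
one of the twelve points of `ℤ²` within distance `√10 / 2` of `(1/2, 1/2)`, so every point of
`L_d` is within `d √10 / 2 ≤ 1` of a center.
-/

lemma EuclideanSpace.dist_sq_eq_fin_two (p q : EuclideanSpace ℝ (Fin 2)) :
    dist p q ^ 2 = (p 0 - q 0) ^ 2 + (p 1 - q 1) ^ 2 := by
  rw [EuclideanSpace.dist_eq, Real.sq_sqrt (by positivity), Fin.sum_univ_two,
    Real.dist_eq, Real.dist_eq, sq_abs, sq_abs]

noncomputable def coverCenter (d : ℝ) (a b : ℤ) : EuclideanSpace ℝ (Fin 2) :=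
  !₂[d * (2 * (a - b) + 1 / 2), d * (3 * (a + b) + 1 / 2)]

lemma thirteen_le_four_mul_sq_add_nine_mul_sq {m n : ℤ} (h : Even (m + n))
    (hne : m ≠ 0 ∨ n ≠ 0) : 13 ≤ 4 * m ^ 2 + 9 * n ^ 2 := by
  obtain ⟨k, hk⟩ := h
  rcases eq_or_ne m 0 with rfl | hm
  · have hk₀ : 0 < k ^ 2 := sq_pos_iff.2 (by omega)
    have hn : n = 2 * k := by omega
    subst hn
    linarith
  rcases eq_or_ne n 0 with rfl | hn
  · have hk₀ : 0 < k ^ 2 := sq_pos_iff.2 (by omega)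
    have hm' : m = 2 * k := by omega
    subst hm'
    linarith
  · linarith [sq_pos_iff.2 hm, sq_pos_iff.2 hn]

lemma two_le_dist_coverCenter {d : ℝ} (hd : 4 ≤ 13 * d ^ 2) {a₁ b₁ a₂ b₂ : ℤ}
    (hne : (a₁, b₁) ≠ (a₂, b₂)) : 2 ≤ dist (coverCenter d a₁ b₁) (coverCenter d a₂ b₂) := by
  set m := (a₁ - b₁) - (a₂ - b₂)
  set n := (a₁ + b₁) - (a₂ + b₂)
  have hmn : (13 : ℝ) ≤ 4 * m ^ 2 + 9 * n ^ 2 := by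
    refine mod_cast thirteen_le_four_mul_sq_add_nine_mul_sq ⟨a₁ - a₂, by ring⟩ ?_
    contrapose! hne
    simp only [Prod.mk.injEq]
    omega
  have hsq : dist (coverCenter d a₁ b₁) (coverCenter d a₂ b₂) ^ 2
      = d ^ 2 * (4 * m ^ 2 + 9 * n ^ 2) := by
    simp only [EuclideanSpace.dist_sq_eq_fin_two, coverCenter, Matrix.cons_val_zero,
      Matrix.cons_val_one, Matrix.cons_val_fin_one, m, n]
    push_cast
    ring
  nlinarith [dist_nonneg (x := coverCenter d a₁ b₁) (y := coverCenter d a₂ b₂)]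

lemma exists_near_center_of_lt {r₁ r₂ : ℤ} (h₁ : 0 ≤ r₁ ∧ r₁ < 4) (h₂ : 0 ≤ r₂ ∧ r₂ < 6) :
    ∃ a b : ℤ, (2 * (r₁ - 2 * (a - b)) - 1) ^ 2 + (2 * (r₂ - 3 * (a + b)) - 1) ^ 2 ≤ 10 := by
  have key : ∀ s₁ : Fin 4, ∀ s₂ : Fin 6, ∃ a ∈ Finset.Icc (0 : ℤ) 1, ∃ b ∈ Finset.Icc (-1 : ℤ) 1,
      (2 * ((s₁ : ℤ) - 2 * (a - b)) - 1) ^ 2 + (2 * ((s₂ : ℤ) - 3 * (a + b)) - 1) ^ 2 ≤ 10 := by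
    decide
  lift r₁ to ℕ using h₁.1
  lift r₂ to ℕ using h₂.1
  obtain ⟨a, -, b, -, hab⟩ := key ⟨r₁, by omega⟩ ⟨r₂, by omega⟩
  exact ⟨a, b, hab⟩

lemma exists_near_center (i j : ℤ) :
    ∃ a b : ℤ, (2 * (i - 2 * (a - b)) - 1) ^ 2 + (2 * (j - 3 * (a + b)) - 1) ^ 2 ≤ 10 := by
  -- the center lattice contains `(4, 0)` and `(0, 6)`
  obtain ⟨a, b, hab⟩ := exists_near_center_of_lt (r₁ := i % 4) (r₂ := j % 6) (by omega) (by omega)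
  refine ⟨a + i / 4 + j / 6, b - i / 4 + j / 6, ?_⟩
  convert hab using 5 <;> omega

lemma exists_dist_coverCenter_le_one {d : ℝ} (hd : 5 * d ^ 2 ≤ 2) {p : EuclideanSpace ℝ (Fin 2)}
    (hp : p ∈ squareLattice d) : ∃ a b : ℤ, dist p (coverCenter d a b) ≤ 1 := by
  obtain ⟨i, j, hi, hj⟩ := hp
  obtain ⟨a, b, hab⟩ := exists_near_center i j
  refine ⟨a, b, (sq_le_one_iff₀ dist_nonneg).1 ?_⟩
  have hab' : ((2 * (i - 2 * (a - b)) - 1) ^ 2 + (2 * (j - 3 * (a + b)) - 1) ^ 2 : ℝ) ≤ 10 := by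
    exact_mod_cast hab
  have hsq : dist p (coverCenter d a b) ^ 2 = d ^ 2 / 4 *
      ((2 * (i - 2 * (a - b)) - 1) ^ 2 + (2 * (j - 3 * (a + b)) - 1) ^ 2) := by
    simp only [EuclideanSpace.dist_sq_eq_fin_two, coverCenter, Matrix.cons_val_zero,
      Matrix.cons_val_one, Matrix.cons_val_fin_one, hi, hj]
    ring
  rw [hsq]
  calc _ ≤ d ^ 2 / 4 * 10 := by gcongr
    _ ≤ 1 := by linarith

theorem lattice_coverable_interval1 (d : ℝ)
    (hd : d ∈ Set.Icc (2 / Real.sqrt 13) (Real.sqrt (2 / 5))) :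
    CoverableByUnitDisks (squareLattice d) := by
  obtain ⟨hlo, hhi⟩ := hd
  have hd₀ : 0 ≤ d := le_trans (by positivity) hlo
  have hsep : 4 ≤ 13 * d ^ 2 := by
    have := pow_le_pow_left₀ (by positivity) hlo 2
    rw [div_pow, Real.sq_sqrt (by norm_num)] at this
    linarith
  have hcov : 5 * d ^ 2 ≤ 2 := by
    have := (Real.le_sqrt hd₀ (by norm_num)).1 hhi
    linarith
  refine ⟨ℤ × ℤ, fun c => coverCenter d c.1 c.2, fun _ _ hne => two_le_dist_coverCenter hsep hne, ?_⟩
  intro p hp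
  obtain ⟨a, b, hab⟩ := exists_dist_coverCenter_le_one hcov hp
  exact Set.mem_iUnion.2 ⟨(a, b), hab⟩
end

section
/- For every real number d with 2/3 ≤ d ≤ 1/√2, the lattice L_d can be covered by closed unit disks with pairwise disjoint interiors. -/
/-!
Tile `L_d` by `3 × 3` blocks of lattice points and put a unit disk at the middle point of each
block. Middle points of distinct blocks are `3d ≥ 2` apart in some coordinate, and every lattice
point is at most `d` away from its block's middle point in each coordinate, hence at Euclidean
distance at most `√2 d ≤ 1`. The same works for `(2l+1) × (2l+1)` blocks whenever
`2 ≤ (2l+1) d` and `√2 l d ≤ 1`.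
-/

theorem EuclideanSpace.dist_le_sqrt_card_mul {ι : Type*} [Fintype ι]
    {x y : EuclideanSpace ℝ ι} {r : ℝ} (hr : 0 ≤ r) (h : ∀ i, dist (x i) (y i) ≤ r) :
    dist x y ≤ √(Fintype.card ι) * r := by
  have hsum : ∑ i, dist (x i) (y i) ^ 2 ≤ Fintype.card ι * r ^ 2 := by
    simpa using Finset.sum_le_card_nsmul Finset.univ _ _
      fun i _ => pow_le_pow_left₀ dist_nonneg (h i) 2
  calc dist x y = √(∑ i, dist (x i) (y i) ^ 2) := EuclideanSpace.dist_eq x y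
    _ ≤ √(Fintype.card ι * r ^ 2) := Real.sqrt_le_sqrt hsum
    _ = √(Fintype.card ι) * r := by rw [Real.sqrt_mul (Nat.cast_nonneg _), Real.sqrt_sq hr]

theorem Int.abs_sub_mul_ediv_add_le (l : ℕ) (m : ℤ) :
    |m - ((2 * l + 1) * (m / (2 * l + 1)) + l)| ≤ l := by
  have hk : (0 : ℤ) < 2 * l + 1 := by omega
  have := Int.emod_nonneg m hk.ne'
  have := Int.emod_lt_of_pos m hk
  have := Int.mul_ediv_add_emod m (2 * l + 1)
  rw [abs_le]
  constructor <;> linarith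

/-- The middle point of the block `q` when `L_d` is tiled by `(2l+1) × (2l+1)` blocks of
lattice points. -/
def blockMiddle (d : ℝ) (l : ℕ) (q : ℤ × ℤ) : EuclideanSpace ℝ (Fin 2) :=
  !₂[d * ((2 * l + 1) * q.1 + l), d * ((2 * l + 1) * q.2 + l)]

theorem two_le_dist_blockMiddle {d : ℝ} {l : ℕ} (hsep : 2 ≤ (2 * l + 1) * d)
    {q q' : ℤ × ℤ} (hne : q ≠ q') : 2 ≤ dist (blockMiddle d l q) (blockMiddle d l q') := by
  have coord : ∀ a b : ℤ, a ≠ b →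
      2 ≤ dist (d * ((2 * l + 1) * a + l)) (d * ((2 * l + 1) * b + l)) := by
    intro a b hab
    have hab' : (1 : ℝ) ≤ |(a : ℝ) - b| := by
      exact_mod_cast Int.one_le_abs (sub_ne_zero.mpr hab)
    calc (2 : ℝ) ≤ (2 * l + 1) * d * 1 := by linarith
      _ ≤ (2 * l + 1) * d * |(a : ℝ) - b| := mul_le_mul_of_nonneg_left hab' (by linarith)
      _ = _ := by
        rw [Real.dist_eq, show d * ((2 * l + 1) * a + l) - d * ((2 * l + 1) * b + l)
          = (2 * l + 1) * d * (a - b) by ring, abs_mul,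
          abs_of_nonneg (show (0 : ℝ) ≤ (2 * l + 1) * d by linarith)]
  obtain ⟨a, b⟩ := q
  obtain ⟨a', b'⟩ := q'
  by_cases ha : a = a'
  · have hb : b ≠ b' := fun hb => hne (by rw [ha, hb])
    simpa [blockMiddle] using (coord b b' hb).trans
      (PiLp.dist_apply_le (blockMiddle d l (a, b)) (blockMiddle d l (a', b')) 1)
  · simpa [blockMiddle] using (coord a a' ha).trans
      (PiLp.dist_apply_le (blockMiddle d l (a, b)) (blockMiddle d l (a', b')) 0)

theorem dist_blockMiddle_le {d : ℝ} (hd : 0 ≤ d) (l : ℕ) {p : EuclideanSpace ℝ (Fin 2)}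
    {m n : ℤ} (hm : p 0 = d * m) (hn : p 1 = d * n) :
    dist p (blockMiddle d l (m / (2 * l + 1), n / (2 * l + 1))) ≤ √2 * (l * d) := by
  have coord : ∀ a : ℤ,
      dist (d * a) (d * ((2 * l + 1) * ↑(a / (2 * l + 1)) + l)) ≤ l * d := by
    intro a
    have := Int.abs_sub_mul_ediv_add_le l a
    rw [Real.dist_eq, ← mul_sub, abs_mul, abs_of_nonneg hd, mul_comm]
    gcongr
    exact_mod_cast this
  simpa using EuclideanSpace.dist_le_sqrt_card_mul (by positivity) (x := p) <| by
    simpa [Fin.forall_fin_two, hm, hn, blockMiddle] using ⟨coord m, coord n⟩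

theorem coverableByUnitDisks_squareLattice (d : ℝ) (l : ℕ) (hsep : 2 ≤ (2 * l + 1) * d)
    (hcov : √2 * (l * d) ≤ 1) : CoverableByUnitDisks (squareLattice d) := by
  have hd : 0 ≤ d := by
    by_contra! h
    nlinarith
  refine ⟨ℤ × ℤ, blockMiddle d l, fun q q' => two_le_dist_blockMiddle hsep, ?_⟩
  rintro p ⟨m, n, hm, hn⟩
  exact Set.mem_iUnion.mpr ⟨_, (dist_blockMiddle_le hd l hm hn).trans hcov⟩

theorem lattice_coverable_interval3 (d : ℝ)
    (hd : d ∈ Set.Icc (2 / 3) (1 / Real.sqrt 2)) :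
    CoverableByUnitDisks (squareLattice d) := by
  obtain ⟨hlow, hhigh⟩ := hd
  have hcov : √2 * ((1 : ℕ) * d) ≤ 1 := by
    rw [le_div_iff₀ (by positivity)] at hhigh
    simpa [mul_comm] using hhigh
  exact coverableByUnitDisks_squareLattice d 1 (by push_cast; linarith) hcov
end

section
/- For every real number d with 4/√26 ≤ d ≤ 2/√5, the lattice L_d can be covered by closed unit disks with pairwise disjoint interiors. -/
def sqDist (p q : ℤ × ℤ) : ℤ := (p.1 - q.1) ^ 2 + (p.2 - q.2) ^ 2

lemma sqDist_add_add_right (p q v : ℤ × ℤ) : sqDist (p + v) (q + v) = sqDist p q := by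
  simp only [sqDist, Prod.fst_add, Prod.snd_add, add_sub_add_right_eq_sub]

def scaledPoint (s : ℝ) (p : ℤ × ℤ) : EuclideanSpace ℝ (Fin 2) := !₂[s * p.1, s * p.2]

lemma dist_scaledPoint_sq (s : ℝ) (p q : ℤ × ℤ) :
    dist (scaledPoint s p) (scaledPoint s q) ^ 2 = s ^ 2 * sqDist p q := by
  rw [EuclideanSpace.dist_eq, Real.sq_sqrt (by positivity), Fin.sum_univ_two]
  simp only [scaledPoint, PiLp.toLp_apply, Matrix.cons_val_zero, Matrix.cons_val_one,
    Real.dist_eq, sq_abs, sqDist]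
  push_cast
  ring

lemma coverableByUnitDisks_squareLattice_of_intPattern {ι : Type} (c : ι → ℤ × ℤ) {d A B : ℝ}
    (hsep : ∀ i j, i ≠ j → A ≤ sqDist (c i) (c j))
    (hcov : ∀ m n : ℤ, ∃ i, sqDist (2 * m, 2 * n) (c i) ≤ B)
    (hA : 16 ≤ A * d ^ 2) (hB : B * d ^ 2 ≤ 4) :
    CoverableByUnitDisks (squareLattice d) := by
  refine ⟨ι, fun i ↦ scaledPoint (d / 2) (c i), fun i j hij ↦ ?_, ?_⟩
  · rw [← pow_le_pow_iff_left₀ zero_le_two dist_nonneg two_ne_zero, dist_scaledPoint_sq]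
    nlinarith [hsep i j hij, sq_nonneg d]
  · rintro p ⟨m, n, hm, hn⟩
    obtain ⟨i, hi⟩ := hcov m n
    have hp : p = scaledPoint (d / 2) (2 * m, 2 * n) := by
      ext j; fin_cases j <;> simp [scaledPoint, hm, hn] <;> ring
    refine Set.mem_iUnion.2 ⟨i, ?_⟩
    rw [Metric.mem_closedBall, ← sq_le_one_iff₀ dist_nonneg, hp, dist_scaledPoint_sq]
    nlinarith [sq_nonneg d]

lemma sq_le_mul_sq_of_div_sqrt_le {c A d : ℝ} (hc : 0 ≤ c) (hA : 0 < A) (h : c / √A ≤ d) :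
    c ^ 2 ≤ A * d ^ 2 := by
  rw [div_le_iff₀ (Real.sqrt_pos.2 hA)] at h
  calc c ^ 2 ≤ (d * √A) ^ 2 := pow_le_pow_left₀ hc h 2
    _ = A * d ^ 2 := by rw [mul_pow, Real.sq_sqrt hA.le, mul_comm]

lemma mul_sq_le_sq_of_le_div_sqrt {c B d : ℝ} (hB : 0 < B) (hd : 0 ≤ d) (h : d ≤ c / √B) :
    B * d ^ 2 ≤ c ^ 2 := by
  rw [le_div_iff₀ (Real.sqrt_pos.2 hB)] at h
  calc B * d ^ 2 = (d * √B) ^ 2 := by rw [mul_pow, Real.sq_sqrt hB.le, mul_comm]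
    _ ≤ c ^ 2 := pow_le_pow_left₀ (by positivity) h 2

def periodVec (i j : ℤ) : ℤ × ℤ := (24 * i + 6 * j, 6 * j)

lemma periodVec_add (i j i' j' : ℤ) :
    periodVec (i + i') (j + j') = periodVec i j + periodVec i' j' := by
  simp only [periodVec, Prod.mk_add_mk, Prod.mk.injEq]; constructor <;> ring

def patternBase : Fin 6 → ℤ × ℤ := ![(4, 5), (3, 0), (8, 1), (13, 2), (23, 4), (18, 3)]

def pattern (q : Fin 6 × ℤ × ℤ) : ℤ × ℤ := patternBase q.1 + periodVec q.2.1 q.2.2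

lemma patternBase_mem_box (k : Fin 6) :
    (patternBase k).1 ∈ Set.Icc 3 23 ∧ (patternBase k).2 ∈ Set.Icc 0 5 := by
  fin_cases k <;> simp [patternBase]

lemma sqDist_pattern (k k' : Fin 6) (i j i' j' : ℤ) :
    sqDist (pattern (k, i, j)) (pattern (k', i', j'))
      = sqDist (patternBase k + periodVec (i - i') (j - j')) (patternBase k') := by
  simp only [sqDist, pattern, periodVec, Prod.fst_add, Prod.snd_add]
  ring

lemma period_mem_Icc_of_sqDist_le (k k' : Fin 6) (a b : ℤ)
    (h : sqDist (patternBase k + periodVec a b) (patternBase k') ≤ 25) :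
    a ∈ Finset.Icc (-1) 1 ∧ b ∈ Finset.Icc (-1) 1 := by
  obtain ⟨⟨hx₁, hx₂⟩, ⟨hy₁, hy₂⟩⟩ := patternBase_mem_box k
  obtain ⟨⟨hx₁', hx₂'⟩, ⟨hy₁', hy₂'⟩⟩ := patternBase_mem_box k'
  simp only [sqDist, periodVec, Prod.fst_add, Prod.snd_add] at h
  set x := (patternBase k).1 + (24 * a + 6 * b) - (patternBase k').1 with hx
  set y := (patternBase k).2 + 6 * b - (patternBase k').2 with hy
  have hx5 := abs_le_of_sq_le_sq' (b := 5) (by nlinarith [sq_nonneg y]) (by norm_num : (0 : ℤ) ≤ 5)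
  have hy5 := abs_le_of_sq_le_sq' (b := 5) (by nlinarith [sq_nonneg x]) (by norm_num : (0 : ℤ) ≤ 5)
  simp only [Finset.mem_Icc]
  omega

lemma le_sqDist_patternBase_add_periodVec :
    ∀ k k' : Fin 6, ∀ a ∈ Finset.Icc (-1 : ℤ) 1, ∀ b ∈ Finset.Icc (-1 : ℤ) 1,
      (k = k' → a ≠ 0 ∨ b ≠ 0) → 26 ≤ sqDist (patternBase k + periodVec a b) (patternBase k') := by
  decide

lemma pattern_separated {q q' : Fin 6 × ℤ × ℤ} (hne : q ≠ q') :
    26 ≤ sqDist (pattern q) (pattern q') := by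
  obtain ⟨k, i, j⟩ := q
  obtain ⟨k', i', j'⟩ := q'
  rw [sqDist_pattern]
  by_contra! h
  obtain ⟨ha, hb⟩ := period_mem_Icc_of_sqDist_le k k' _ _ (Int.lt_add_one_iff.1 h)
  refine h.not_ge (le_sqDist_patternBase_add_periodVec k k' _ ha _ hb fun hk ↦ ?_)
  by_contra! h0
  exact hne (by rw [hk, sub_eq_zero.1 h0.1, sub_eq_zero.1 h0.2])

lemma exists_patternBase_near :
    ∀ u ∈ Finset.Ico (0 : ℤ) 12, ∀ r ∈ Finset.Ico (0 : ℤ) 3, ∃ k : Fin 6,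
      ∃ i ∈ Finset.Icc (-1 : ℤ) 1, ∃ j ∈ Finset.Icc (-1 : ℤ) 1,
        sqDist (2 * u, 2 * r) (patternBase k + periodVec i j) ≤ 5 := by
  decide

lemma pattern_covers (m n : ℤ) : ∃ q, sqDist (2 * m, 2 * n) (pattern q) ≤ 5 := by
  set a := n / 3
  set b := (m - 3 * a) / 12
  obtain ⟨k, i, -, j, -, hk⟩ := exists_patternBase_near ((m - 3 * a) % 12)
    (Finset.mem_Ico.2 ⟨by omega, by omega⟩) (n % 3) (Finset.mem_Ico.2 ⟨by omega, by omega⟩)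
  have hmn : ((2 * m, 2 * n) : ℤ × ℤ)
      = (2 * ((m - 3 * a) % 12), 2 * (n % 3)) + periodVec b a := by
    simp only [periodVec, Prod.mk_add_mk, Prod.mk.injEq]; omega
  refine ⟨(k, i + b, j + a), ?_⟩
  rwa [pattern, periodVec_add, ← add_assoc, hmn, sqDist_add_add_right]

theorem lattice_coverable_interval4 (d : ℝ)
    (hd : d ∈ Set.Icc (4 / Real.sqrt 26) (2 / Real.sqrt 5)) :
    CoverableByUnitDisks (squareLattice d) := by
  have hd0 : 0 ≤ d := le_trans (by positivity) hd.1
  have hA : (4 : ℝ) ^ 2 ≤ 26 * d ^ 2 :=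
    sq_le_mul_sq_of_div_sqrt_le (by norm_num) (by norm_num) hd.1
  have hB : 5 * d ^ 2 ≤ (2 : ℝ) ^ 2 := mul_sq_le_sq_of_le_div_sqrt (by norm_num) hd0 hd.2
  refine coverableByUnitDisks_squareLattice_of_intPattern pattern (A := 26) (B := 5)
    (fun q q' hne ↦ by exact_mod_cast pattern_separated hne) (fun m n ↦ ?_)
    (by linarith) (by linarith)
  obtain ⟨q, hq⟩ := pattern_covers m n
  exact ⟨q, by exact_mod_cast hq⟩
end

section
/- For every real number d with 1 ≤ d ≤ √2, the lattice L_d can be covered by closed unit disks with pairwise disjoint interiors; indeed, the disks circumscribing the squares of the lattice cover the points four at a time. -/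
/-!
Among the squares of `L_d`, take those whose lower left corner has both coordinates in `2dℤ`.
Every lattice point is a corner of exactly one of them, so their circumscribed disks cover
`L_d` as soon as the half-diagonal `d / √2` is at most `1`, and their centers lie on a copy of
`L_{2d}`, hence at mutual distance at least `2d ≥ 2`.
-/

open Metric

lemma EuclideanSpace.dist_fin_two (x y : EuclideanSpace ℝ (Fin 2)) :
    dist x y = √((x 0 - y 0) ^ 2 + (x 1 - y 1) ^ 2) := by
  simp [EuclideanSpace.dist_eq, Fin.sum_univ_two, Real.dist_eq, sq_abs]

lemma abs_sub_two_mul_ediv_two_sub_half (m : ℤ) :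
    |(m : ℝ) - (2 * (m / 2 : ℤ) + 1 / 2)| = 1 / 2 := by
  have hm : (m : ℝ) = 2 * (m / 2 : ℤ) + (m % 2 : ℤ) := by
    exact_mod_cast (Int.mul_ediv_add_emod m 2).symm
  rcases Int.emod_two_eq m with h | h <;> rw [hm, h] <;> norm_num [abs_of_neg, abs_of_pos]

noncomputable def evenSquareCenter (d : ℝ) (k : ℤ × ℤ) : EuclideanSpace ℝ (Fin 2) :=
  !₂[d * (2 * k.1 + 1 / 2), d * (2 * k.2 + 1 / 2)]

lemma two_mul_abs_le_dist_of_ne (d : ℝ) {a b : ℤ} (hab : a ≠ b) :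
    2 * |d| ≤ dist (d * (2 * a + 1 / 2)) (d * (2 * b + 1 / 2)) := by
  have hab' : (1 : ℝ) ≤ |(a : ℝ) - b| := by exact_mod_cast Int.one_le_abs (sub_ne_zero.2 hab)
  calc 2 * |d| ≤ 2 * |d| * |(a : ℝ) - b| := le_mul_of_one_le_right (by positivity) hab'
    _ = |d * (2 * (a - b))| := by rw [abs_mul, abs_mul, abs_two]; ring
    _ = _ := by rw [Real.dist_eq]; ring_nf

lemma two_mul_abs_le_dist_evenSquareCenter (d : ℝ) {k l : ℤ × ℤ} (hkl : k ≠ l) :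
    2 * |d| ≤ dist (evenSquareCenter d k) (evenSquareCenter d l) := by
  have hcoord := PiLp.dist_apply_le (evenSquareCenter d k) (evenSquareCenter d l)
  rcases not_and_or.1 (Prod.ext_iff.not.1 hkl) with h | h
  · exact (two_mul_abs_le_dist_of_ne d h).trans (hcoord 0)
  · exact (two_mul_abs_le_dist_of_ne d h).trans (hcoord 1)

lemma dist_evenSquareCenter_ediv_two {d : ℝ} {m n : ℤ}
    {p : EuclideanSpace ℝ (Fin 2)} (h0 : p 0 = d * m) (h1 : p 1 = d * n) :
    dist p (evenSquareCenter d (m / 2, n / 2)) = |d| / √2 := by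
  have hcoord : ∀ (i : Fin 2) (a : ℤ), p i = d * a →
      evenSquareCenter d (m / 2, n / 2) i = d * (2 * (a / 2 : ℤ) + 1 / 2) →
      (p i - evenSquareCenter d (m / 2, n / 2) i) ^ 2 = d ^ 2 / 4 := by
    intro i a hp hc
    rw [hp, hc, ← mul_sub, mul_pow, ← sq_abs (_ - _), abs_sub_two_mul_ediv_two_sub_half]
    ring
  rw [EuclideanSpace.dist_fin_two, hcoord 0 m h0 rfl, hcoord 1 n h1 rfl,
    show d ^ 2 / 4 + d ^ 2 / 4 = (|d| / √2) ^ 2 by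
      rw [div_pow, sq_abs, Real.sq_sqrt zero_le_two]; ring]
  exact Real.sqrt_sq (by positivity)

theorem lattice_coverable_interval6 (d : ℝ)
    (hd : d ∈ Set.Icc 1 (Real.sqrt 2)) :
    CoverableByUnitDisks (squareLattice d) := by
  obtain ⟨hd1, hd2⟩ := hd
  have habs : |d| = d := abs_of_pos (one_pos.trans_le hd1)
  refine ⟨ℤ × ℤ, evenSquareCenter d, fun k l hkl => ?_, ?_⟩
  · linarith [two_mul_abs_le_dist_evenSquareCenter d hkl]
  · rintro p ⟨m, n, h0, h1⟩
    refine Set.mem_iUnion.2 ⟨(m / 2, n / 2), mem_closedBall.2 ?_⟩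
    rw [dist_evenSquareCenter_ediv_two h0 h1, habs]
    exact div_le_one_of_le₀ hd2 (Real.sqrt_nonneg 2)
end

section
/- For every real number d with 4/√26 ≤ d, the lattice L_d can be covered by closed unit disks with pairwise disjoint interiors. -/
/-!
All five coverings put the centres on a coset of an integer lattice `Λ`, measured in units of
`s = d / N` with `N ∈ {1, 2}`, so that the points of `L_d` are the points of `N ℤ²`. If every
nonzero vector of `Λ` has squared length `≥ δ` and every point of `N ℤ²` lies within squared
distance `ρ` of the coset, then the disks are disjoint as soon as `4 ≤ s² δ` and cover as soon as
`s² ρ ≤ 1`. The paper's tilings give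

* `d² ≥ 4`: `Λ = ℤ²`, `N = 1`, `(δ, ρ) = (1, 0)`;
* `2 ≤ d² ≤ 4` (dominoes): `Λ = ⟨(4,0), (2,2)⟩ + (1,0)`, `N = 2`, `(δ, ρ) = (8, 1)`;
* `1 ≤ d² ≤ 2` (`2 × 2` squares): `Λ = 4ℤ² + (1,1)`, `N = 2`, `(δ, ρ) = (16, 2)`;
* `4/5 ≤ d² ≤ 1` (plus pentominoes): `Λ = ⟨(1,2), (2,-1)⟩`, `N = 1`, `(δ, ρ) = (5, 1)`;
* `16/26 ≤ d² ≤ 4/5` (herringbone of `2 × 3` bricks): `Λ = ⟨(1,5), (5,1)⟩ + (1,0)`, `N = 2`,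
  `(δ, ρ) = (26, 5)`.

The covering radius in the last two cases comes from a residue computation: a point `v` lies in
`⟨(1,c), (c,e)⟩` iff `c² - e ∣ c v₁ - v₂`, and a few short vectors represent every residue needed.
-/

def scaledIntPoint (s : ℝ) (x y : ℤ) : EuclideanSpace ℝ (Fin 2) :=
  !₂[s * x, s * y]

lemma dist_scaledIntPoint_sq (s : ℝ) (x y x' y' : ℤ) :
    dist (scaledIntPoint s x y) (scaledIntPoint s x' y') ^ 2 =
      s ^ 2 * ((x - x') ^ 2 + (y - y') ^ 2 : ℤ) := by
  rw [EuclideanSpace.dist_eq, Real.sq_sqrt (by positivity), Fin.sum_univ_two]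
  simp only [scaledIntPoint, Real.dist_eq, sq_abs, Matrix.cons_val_zero, Matrix.cons_val_one,
    Matrix.cons_val_fin_one]
  push_cast
  ring

lemma mem_squareLattice_mul_intCast_iff (s : ℝ) (N : ℤ) (p : EuclideanSpace ℝ (Fin 2)) :
    p ∈ squareLattice (s * N) ↔ ∃ m n : ℤ, p = scaledIntPoint s (N * m) (N * n) := by
  constructor
  · rintro ⟨m, n, hm, hn⟩
    refine ⟨m, n, ?_⟩
    ext i; fin_cases i <;> simp [scaledIntPoint, hm, hn, mul_assoc]
  · rintro ⟨m, n, rfl⟩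
    exact ⟨m, n, by simp [scaledIntPoint, mul_assoc], by simp [scaledIntPoint, mul_assoc]⟩

theorem coverableByUnitDisks_of_intCenters {ι : Type} {d : ℝ} (s : ℝ) (N : ℤ) (hd : s * N = d)
    (cx cy : ι → ℤ) (δ ρ : ℤ)
    (hsep : ∀ i j, i ≠ j → δ ≤ (cx i - cx j) ^ 2 + (cy i - cy j) ^ 2)
    (hcov : ∀ m n : ℤ, ∃ i, (N * m - cx i) ^ 2 + (N * n - cy i) ^ 2 ≤ ρ)
    (hδ : 4 ≤ s ^ 2 * δ) (hρ : s ^ 2 * ρ ≤ 1) :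
    CoverableByUnitDisks (squareLattice d) := by
  subst hd
  refine ⟨ι, fun i => scaledIntPoint s (cx i) (cy i), fun i j hij => ?_, fun p hp => ?_⟩
  · refine (pow_le_pow_iff_left₀ zero_le_two dist_nonneg two_ne_zero).1 ?_
    rw [dist_scaledIntPoint_sq]
    calc (2 : ℝ) ^ 2 ≤ s ^ 2 * δ := by linarith
      _ ≤ _ := by gcongr; exact_mod_cast hsep i j hij
  · obtain ⟨m, n, rfl⟩ := (mem_squareLattice_mul_intCast_iff s N p).1 hp
    obtain ⟨i, hi⟩ := hcov m n
    refine Set.mem_iUnion.2 ⟨i, Metric.mem_closedBall.2 ?_⟩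
    refine (pow_le_pow_iff_left₀ dist_nonneg zero_le_one two_ne_zero).1 ?_
    rw [dist_scaledIntPoint_sq]
    calc _ ≤ s ^ 2 * ρ := by gcongr
      _ ≤ _ := by linarith

lemma one_le_sq_add_sq_of_ne {x y x' y' : ℤ} (h : (x, y) ≠ (x', y')) :
    1 ≤ (x - x') ^ 2 + (y - y') ^ 2 := by
  rcases ne_or_eq x x' with hx | rfl
  · nlinarith [sq_pos_of_ne_zero (sub_ne_zero.2 hx), sq_nonneg (y - y')]
  · have hy : y - y' ≠ 0 := sub_ne_zero.2 fun hy => h (by rw [hy])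
    nlinarith [sq_pos_of_ne_zero hy]

theorem coverableByUnitDisks_of_latticeTranslate {d : ℝ} (s : ℝ) (N : ℤ) (hd : s * N = d)
    (a b c e t₁ t₂ δ ρ : ℤ)
    (hsep : ∀ x y : ℤ, 1 ≤ x ^ 2 + y ^ 2 → δ ≤ (a * x + b * y) ^ 2 + (c * x + e * y) ^ 2)
    (hcov : ∀ m n : ℤ, ∃ k l : ℤ,
      (N * m - t₁ - (a * k + b * l)) ^ 2 + (N * n - t₂ - (c * k + e * l)) ^ 2 ≤ ρ)
    (hδ : 4 ≤ s ^ 2 * δ) (hρ : s ^ 2 * ρ ≤ 1) :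
    CoverableByUnitDisks (squareLattice d) := by
  refine coverableByUnitDisks_of_intCenters s N hd (fun i : ℤ × ℤ => a * i.1 + b * i.2 + t₁)
    (fun i => c * i.1 + e * i.2 + t₂) δ ρ (fun i j hij => ?_) (fun m n => ?_) hδ hρ
  · convert hsep _ _ (one_le_sq_add_sq_of_ne hij) using 2 <;> ring
  · obtain ⟨k, l, h⟩ := hcov m n
    exact ⟨(k, l), by convert h using 3 <;> ring⟩

lemma exists_sq_add_sq_le_of_dvd (c e ρ x y w₁ w₂ : ℤ) (hxy : x ^ 2 + y ^ 2 ≤ ρ)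
    (h : c ^ 2 - e ∣ c * w₁ - w₂ - (c * x - y)) :
    ∃ k l : ℤ, (w₁ - (k + c * l)) ^ 2 + (w₂ - (c * k + e * l)) ^ 2 ≤ ρ := by
  obtain ⟨l, hl⟩ := h
  refine ⟨w₁ - x - c * l, l, ?_⟩
  rwa [show w₁ - (w₁ - x - c * l + c * l) = x by ring,
    show w₂ - (c * (w₁ - x - c * l) + e * l) = y by linear_combination -hl]

lemma exists_sq_add_sq_le_one_five_dvd (r : ℤ) :
    ∃ x y : ℤ, x ^ 2 + y ^ 2 ≤ 1 ∧ 5 ∣ r - (2 * x - y) := by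
  have h : r % 5 = 0 ∨ r % 5 = 1 ∨ r % 5 = 2 ∨ r % 5 = 3 ∨ r % 5 = 4 := by omega
  rcases h with h | h | h | h | h
  exacts [⟨0, 0, by norm_num, by omega⟩, ⟨0, -1, by norm_num, by omega⟩,
    ⟨1, 0, by norm_num, by omega⟩, ⟨-1, 0, by norm_num, by omega⟩, ⟨0, 1, by norm_num, by omega⟩]

lemma exists_sq_add_sq_le_five_twentyFour_dvd (r : ℤ) (hr : Odd r) :
    ∃ x y : ℤ, x ^ 2 + y ^ 2 ≤ 5 ∧ 24 ∣ r - (5 * x - y) := by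
  obtain ⟨q, rfl⟩ := hr
  have h : q % 12 = 0 ∨ q % 12 = 1 ∨ q % 12 = 2 ∨ q % 12 = 3 ∨ q % 12 = 4 ∨ q % 12 = 5 ∨
      q % 12 = 6 ∨ q % 12 = 7 ∨ q % 12 = 8 ∨ q % 12 = 9 ∨ q % 12 = 10 ∨ q % 12 = 11 := by omega
  rcases h with h | h | h | h | h | h | h | h | h | h | h | h
  exacts [⟨0, -1, by norm_num, by omega⟩, ⟨1, 2, by norm_num, by omega⟩,
    ⟨1, 0, by norm_num, by omega⟩, ⟨1, -2, by norm_num, by omega⟩,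
    ⟨2, 1, by norm_num, by omega⟩, ⟨2, -1, by norm_num, by omega⟩,
    ⟨-2, 1, by norm_num, by omega⟩, ⟨-2, -1, by norm_num, by omega⟩,
    ⟨-1, 2, by norm_num, by omega⟩, ⟨-1, 0, by norm_num, by omega⟩,
    ⟨-1, -2, by norm_num, by omega⟩, ⟨0, 1, by norm_num, by omega⟩]

lemma sq_two_mul_sub_one_sub_four_mul_ediv_two (r : ℤ) : (2 * r - 1 - 4 * (r / 2)) ^ 2 = 1 := by
  rcases (by omega : 2 * r - 1 - 4 * (r / 2) = 1 ∨ 2 * r - 1 - 4 * (r / 2) = -1) with h | h <;>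
    simp [h]

section

variable {d : ℝ}

theorem coverableByUnitDisks_squareLattice_singletons (hd : 4 ≤ d ^ 2) :
    CoverableByUnitDisks (squareLattice d) :=
  coverableByUnitDisks_of_latticeTranslate d 1 (by simp) 1 0 0 1 0 0 1 0
    (fun x y h => by simpa using h) (fun m n => ⟨m, n, by simp⟩) (by simpa using hd) (by simp)

theorem coverableByUnitDisks_squareLattice_dominoes (hd : 2 ≤ d ^ 2) (hd' : d ^ 2 ≤ 4) :
    CoverableByUnitDisks (squareLattice d) := by
  refine coverableByUnitDisks_of_latticeTranslate (d / 2) 2 (by push_cast; ring) 4 2 0 2 1 0 8 1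
    (fun x y h => ?_) (fun m n => ⟨(m - n) / 2, n, ?_⟩) (by push_cast; nlinarith)
    (by push_cast; nlinarith)
  · rcases eq_or_ne (2 * x + y) 0 with h₀ | h₀
    · rw [show y = -2 * x by omega] at h ⊢
      have : 0 < x ^ 2 := by nlinarith
      nlinarith
    rcases eq_or_ne y 0 with h₁ | h₁
    · rw [h₁] at h ⊢
      nlinarith
    · nlinarith [sq_pos_of_ne_zero h₀, sq_pos_of_ne_zero h₁]
  · nlinarith [sq_two_mul_sub_one_sub_four_mul_ediv_two (m - n)]

theorem coverableByUnitDisks_squareLattice_squares (hd : 1 ≤ d ^ 2) (hd' : d ^ 2 ≤ 2) :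
    CoverableByUnitDisks (squareLattice d) :=
  coverableByUnitDisks_of_latticeTranslate (d / 2) 2 (by push_cast; ring) 4 0 0 4 1 1 16 2
    (fun x y h => by nlinarith) (fun m n => ⟨m / 2, n / 2, by
      nlinarith [sq_two_mul_sub_one_sub_four_mul_ediv_two m,
        sq_two_mul_sub_one_sub_four_mul_ediv_two n]⟩)
    (by push_cast; nlinarith) (by push_cast; nlinarith)

theorem coverableByUnitDisks_squareLattice_plusPentominoes (hd : 4 / 5 ≤ d ^ 2)
    (hd' : d ^ 2 ≤ 1) :
    CoverableByUnitDisks (squareLattice d) := by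
  refine coverableByUnitDisks_of_latticeTranslate d 1 (by simp) 1 2 2 (-1) 0 0 5 1
    (fun x y h => by nlinarith) (fun m n => ?_) (by push_cast; nlinarith) (by push_cast; nlinarith)
  obtain ⟨x, y, hxy, h⟩ := exists_sq_add_sq_le_one_five_dvd (2 * m - n)
  simpa using exists_sq_add_sq_le_of_dvd 2 (-1) 1 x y m n hxy (by simpa using h)

theorem coverableByUnitDisks_squareLattice_herringbone (hd : 16 / 26 ≤ d ^ 2)
    (hd' : d ^ 2 ≤ 4 / 5) :
    CoverableByUnitDisks (squareLattice d) := by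
  refine coverableByUnitDisks_of_latticeTranslate (d / 2) 2 (by push_cast; ring) 1 5 5 1 1 0 26 5
    (fun x y h => ?_) (fun m n => ?_) (by push_cast; nlinarith) (by push_cast; nlinarith)
  · rcases eq_or_ne (x + y) 0 with h₀ | h₀
    · rw [show y = -x by omega] at h ⊢
      have : 0 < x ^ 2 := by nlinarith
      nlinarith
    · nlinarith [sq_pos_of_ne_zero h₀]
  · obtain ⟨x, y, hxy, h⟩ :=
      exists_sq_add_sq_le_five_twentyFour_dvd (5 * (2 * m - 1) - 2 * n) ⟨5 * m - n - 3, by ring⟩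
    simpa using exists_sq_add_sq_le_of_dvd 5 1 5 x y (2 * m - 1) (2 * n) hxy (by simpa using h)

end

theorem lattice_coverable_upper (d : ℝ) (hd : 4 / Real.sqrt 26 ≤ d) :
    CoverableByUnitDisks (squareLattice d) := by
  have hd₀ : 16 / 26 ≤ d ^ 2 :=
    calc (16 : ℝ) / 26 = (4 / √26) ^ 2 := by rw [div_pow, Real.sq_sqrt (by norm_num)]; norm_num
      _ ≤ d ^ 2 := by gcongr
  rcases le_total (d ^ 2) (4 / 5) with h₁ | h₁
  · exact coverableByUnitDisks_squareLattice_herringbone hd₀ h₁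
  rcases le_total (d ^ 2) 1 with h₂ | h₂
  · exact coverableByUnitDisks_squareLattice_plusPentominoes h₁ h₂
  rcases le_total (d ^ 2) 2 with h₃ | h₃
  · exact coverableByUnitDisks_squareLattice_squares h₂ h₃
  rcases le_total (d ^ 2) 4 with h₄ | h₄
  · exact coverableByUnitDisks_squareLattice_dominoes h₃ h₄
  · exact coverableByUnitDisks_squareLattice_singletons h₄
end
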